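/- arXiv:2008.07740 — 2 statements merged into one kernel-verified Lean document; each statement's English description precedes it below -/
import Mathlib

section
/- Let E be a real inner product space, let f : E → ℝ be differentiable with gradient (with respect to the inner product) that is Lipschitz continuous with constant L > 0, and let h : E → ℝ be convex. Fix S ∈ E and set t = 1/L. If d ∈ E is a minimizer over E of the function T ↦ ⟨∇f(S), T⟩ + (1/(2t))‖T‖² + h(S + T), then f(S + d) + h(S + d) − (f(S) + h(S)) ≤ −(L/2)‖d‖². (This is Lemma 1 of the paper, stated for the S-update with the manifold variable U held fixed.) -/
open RealInnerProductSpace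

/-!
The descent lemma for an `L`-Lipschitz gradient gives
`f (S + d) ≤ f S + ⟪∇f S, d⟫ + L/2 ‖d‖²`. The proximal objective is `L`-strongly convex, so
comparing its minimizer `d` with `T = 0` gives `⟪∇f S, d⟫ + L/2 ‖d‖² + h (S + d) + L/2 ‖d‖² ≤ h S`.
Adding the two inequalities yields the claim.
-/

section

variable {E : Type*} [NormedAddCommGroup E] [InnerProductSpace ℝ E]

theorem hasDerivAt_comp_add_smul {f : E → ℝ} {f' : E → E}
    (hdiff : ∀ x, HasFDerivAt f (innerSL ℝ (f' x)) x) (x v : E) (t : ℝ) :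
    HasDerivAt (fun t : ℝ => f (x + t • v)) ⟪f' (x + t • v), v⟫ t := by
  have hline : HasDerivAt (fun t : ℝ => x + t • v) v t := by
    simpa using ((hasDerivAt_id t).smul_const v).const_add x
  exact (hdiff (x + t • v)).comp_hasDerivAt t hline

theorem le_add_inner_add_of_lipschitz_gradient {f : E → ℝ} {f' : E → E} {L : ℝ}
    (hdiff : ∀ x, HasFDerivAt f (innerSL ℝ (f' x)) x)
    (hlip : ∀ x y, ‖f' x - f' y‖ ≤ L * ‖x - y‖) (x y : E) :
    f y ≤ f x + ⟪f' x, y - x⟫ + L / 2 * ‖y - x‖ ^ 2 := by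
  set v := y - x
  set g : ℝ → ℝ := fun t => f (x + t • v) - t * ⟪f' x, v⟫ - L / 2 * t ^ 2 * ‖v‖ ^ 2
  have hg : ∀ t, HasDerivAt g (⟪f' (x + t • v), v⟫ - ⟪f' x, v⟫ - L * t * ‖v‖ ^ 2) t := by
    intro t
    refine (((hasDerivAt_comp_add_smul hdiff x v t).sub
      ((hasDerivAt_id t).mul_const ⟪f' x, v⟫)).sub
      (((hasDerivAt_pow 2 t).const_mul (L / 2)).mul_const (‖v‖ ^ 2))).congr_deriv ?_
    simp only [Nat.cast_ofNat]
    ring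
  have hg_nonpos : ∀ t ∈ interior (Set.Ici (0 : ℝ)),
      ⟪f' (x + t • v), v⟫ - ⟪f' x, v⟫ - L * t * ‖v‖ ^ 2 ≤ 0 := by
    intro t ht
    rw [interior_Ici] at ht
    refine sub_nonpos.2 ?_
    calc ⟪f' (x + t • v), v⟫ - ⟪f' x, v⟫ = ⟪f' (x + t • v) - f' x, v⟫ := (inner_sub_left ..).symm
      _ ≤ ‖f' (x + t • v) - f' x‖ * ‖v‖ := real_inner_le_norm _ _
      _ ≤ L * ‖t • v‖ * ‖v‖ := by
        gcongr
        simpa using hlip (x + t • v) x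
      _ = L * t * ‖v‖ ^ 2 := by
        rw [norm_smul, Real.norm_of_nonneg (le_of_lt ht)]
        ring
  have hanti : AntitoneOn g (Set.Ici 0) :=
    antitoneOn_of_hasDerivWithinAt_nonpos (convex_Ici 0)
      (fun t _ => (hg t).continuousAt.continuousWithinAt)
      (fun t _ => (hg t).hasDerivWithinAt) hg_nonpos
  have h01 : g 1 ≤ g 0 := hanti (Set.mem_Ici.2 le_rfl) (Set.mem_Ici.2 zero_le_one) zero_le_one
  simp only [g, one_smul, zero_smul, add_zero, v, add_sub_cancel] at h01
  linarith

theorem StrongConvexOn.add_le_of_isMinOn {φ : E → ℝ} {s : Set E} {m : ℝ} {d x : E}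
    (hφ : StrongConvexOn s m φ) (hmin : IsMinOn φ s d) (hd : d ∈ s) (hx : x ∈ s) :
    φ d + m / 2 * ‖x - d‖ ^ 2 ≤ φ x := by
  set c := m / 2 * ‖x - d‖ ^ 2 with hc
  have hbound : ∀ a ∈ Set.Ioo (0 : ℝ) 1, φ d + (1 - a) * c ≤ φ x := by
    rintro a ⟨ha0, ha1⟩
    have hconv := hφ.2 hx hd ha0.le (sub_nonneg.2 ha1.le) (add_sub_cancel a 1)
    have hle := hmin (hφ.1 hx hd ha0.le (sub_nonneg.2 ha1.le) (add_sub_cancel a 1))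
    simp only [smul_eq_mul, Set.mem_ofPred_eq] at hconv hle
    have : a * (φ d + (1 - a) * c) ≤ a * φ x := by rw [hc]; linarith
    exact le_of_mul_le_mul_left this ha0
  have hlim : Filter.Tendsto (fun a : ℝ => φ d + (1 - a) * c) (nhdsWithin 0 (Set.Ioi 0))
      (nhds (φ d + c)) := by
    refine tendsto_nhdsWithin_of_tendsto_nhds ?_
    exact (by fun_prop : Continuous fun a : ℝ => φ d + (1 - a) * c).tendsto' 0 _ (by simp)
  exact le_of_tendsto hlim (Filter.eventually_of_mem (Ioo_mem_nhdsGT zero_lt_one) hbound)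

theorem strongConvexOn_inner_add_sq_norm_add {h : E → ℝ} (hconv : ConvexOn ℝ Set.univ h)
    (g S : E) (m : ℝ) :
    StrongConvexOn Set.univ m (fun T => ⟪g, T⟫ + m / 2 * ‖T‖ ^ 2 + h (S + T)) := by
  rw [strongConvexOn_iff_convex]
  have hlin : ConvexOn ℝ Set.univ (fun T => ⟪g, T⟫) :=
    (innerₛₗ ℝ g).convexOn convex_univ
  refine (hlin.add (hconv.translate_right S)).congr fun T _ => ?_
  simp only [Pi.add_apply, Function.comp_apply]
  ring

end

theorem stmt_0_general {E : Type*} [NormedAddCommGroup E] [InnerProductSpace ℝ E]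
    (f h : E → ℝ) (f' : E → E) (L : ℝ)
    (hdiff : ∀ x : E, HasFDerivAt f (innerSL ℝ (f' x)) x)
    (hlip : ∀ x y : E, ‖f' x - f' y‖ ≤ L * ‖x - y‖)
    (hconv : ConvexOn ℝ Set.univ h)
    (S d : E)
    (hmin : IsMinOn
      (fun T : E => ⟪f' S, T⟫ + (1 / (2 * (1 / L))) * ‖T‖ ^ 2 + h (S + T))
      Set.univ d) :
    f (S + d) + h (S + d) - (f S + h S) ≤ -(L / 2) * ‖d‖ ^ 2 := by
  have hcoeff : (1 : ℝ) / (2 * (1 / L)) = L / 2 := by field_simp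
  rw [hcoeff] at hmin
  have hprox := (strongConvexOn_inner_add_sq_norm_add hconv (f' S) S L).add_le_of_isMinOn hmin
    (Set.mem_univ d) (Set.mem_univ 0)
  have hdesc := le_add_inner_add_of_lipschitz_gradient hdiff hlip S (S + d)
  simp only [inner_zero_right, norm_zero, add_zero, zero_sub, norm_neg] at hprox
  simp only [add_sub_cancel_left] at hdesc
  linarith

/-- Lemma 1 of the paper (S-update sufficient decrease): if `d` minimizes the
proximal subproblem `T ↦ ⟨∇f(S), T⟩ + (1/(2t))‖T‖² + h(S + T)` with `t = 1/L`,
where `f` has an `L`-Lipschitz gradient `f'` and `h` is convex, then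
`F(S + d) - F(S) ≤ -(L/2)‖d‖²` for `F = f + h`. -/
theorem stmt_0 {E : Type*} [NormedAddCommGroup E] [InnerProductSpace ℝ E]
    (f h : E → ℝ) (f' : E → E) (L : ℝ) (hL : 0 < L)
    (hdiff : ∀ x : E, HasFDerivAt f (innerSL ℝ (f' x)) x)
    (hlip : ∀ x y : E, ‖f' x - f' y‖ ≤ L * ‖x - y‖)
    (hconv : ConvexOn ℝ Set.univ h)
    (S d : E)
    (hmin : IsMinOn
      (fun T : E => ⟪f' S, T⟫ + (1 / (2 * (1 / L))) * ‖T‖ ^ 2 + h (S + T))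
      Set.univ d) :
    f (S + d) + h (S + d) - (f S + h S) ≤ -(L / 2) * ‖d‖ ^ 2 :=
  stmt_0_general f h f' L hdiff hlip hconv S d hmin
end

section
/- Fix m, n, r ∈ ℕ, an index set Ω ⊆ Fin m × Fin n with complement Ω̄, real matrices M, S of size m × n, a real number λ ≠ 0, and a real m × r matrix U with orthonormal columns, i.e. Uᵀ * U = 1. For an index set Ω, define the projection P_Ω entrywise by (P_Ω Z) i j = Z i j if (i,j) ∈ Ω and 0 otherwise. Then the function V ↦ (1/2)‖P_Ω(U*V − M + S)‖_F² + (λ²/2)‖P_Ω̄(U*V)‖_F² on real r × n matrices has exactly one minimizer. (This is the claim that for fixed U and S the optimal V of f̄(U, V, S) in (17)–(18) is uniquely determined, so V_{U,S} and hence f(U,S) are well defined.) -/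
open Matrix

/-- Entrywise projection onto the index set `Ω`. -/
def projOmega {m n : ℕ} (Ω : Set (Fin m × Fin n)) [DecidablePred (· ∈ Ω)]
    (Z : Matrix (Fin m) (Fin n) ℝ) : Matrix (Fin m) (Fin n) ℝ :=
  fun i j => if (i, j) ∈ Ω then Z i j else 0

/-- Frobenius norm `‖A‖_F = sqrt(trace(Aᵀ A))`. -/
noncomputable def frobNorm {m n : ℕ} (A : Matrix (Fin m) (Fin n) ℝ) : ℝ :=
  Real.sqrt (Matrix.trace (Aᵀ * A))

lemma trace_eq_sum_sq {m n : ℕ} (A : Matrix (Fin m) (Fin n) ℝ) :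
    Matrix.trace (Aᵀ * A) = ∑ i, ∑ j, (A i j) ^ 2 := by
  rw [Matrix.trace, Finset.sum_comm]
  simp [Matrix.diag, Matrix.mul_apply, sq]

lemma frob_sq {m n : ℕ} (A : Matrix (Fin m) (Fin n) ℝ) :
    frobNorm A ^ 2 = ∑ i, ∑ j, (A i j) ^ 2 := by
  rw [frobNorm, Real.sq_sqrt, trace_eq_sum_sq]
  rw [trace_eq_sum_sq]
  positivity

lemma sum_sq_mul_eq {m n r : ℕ} (U : Matrix (Fin m) (Fin r) ℝ) (hU : Uᵀ * U = 1)
    (D : Matrix (Fin r) (Fin n) ℝ) :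
    (∑ i, ∑ j, ((U * D) i j) ^ 2) = ∑ i, ∑ j, (D i j) ^ 2 := by
  rw [← trace_eq_sum_sq, ← trace_eq_sum_sq, Matrix.transpose_mul, Matrix.mul_assoc,
    ← Matrix.mul_assoc Uᵀ, hU, Matrix.one_mul]

lemma dsum_linear3 {m n : ℕ} (a b c : ℝ) (F G H : Fin m → Fin n → ℝ) :
    (∑ i, ∑ j, (a * F i j + b * G i j + c * H i j))
      = a * (∑ i, ∑ j, F i j) + b * (∑ i, ∑ j, G i j) + c * (∑ i, ∑ j, H i j) := by
  simp [Finset.sum_add_distrib, Finset.mul_sum]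

lemma dsum_linear2 {m n : ℕ} (a b : ℝ) (F G : Fin m → Fin n → ℝ) :
    (∑ i, ∑ j, (a * F i j + b * G i j))
      = a * (∑ i, ∑ j, F i j) + b * (∑ i, ∑ j, G i j) := by
  simp [Finset.sum_add_distrib, Finset.mul_sum]

lemma dsum_le_of_entry {m n : ℕ} (F : Fin m → Fin n → ℝ) {i : Fin m} {j : Fin n}
    (h : ∀ i' j', 0 ≤ F i' j') : F i j ≤ ∑ i', ∑ j', F i' j' :=
  le_trans (Finset.single_le_sum (fun j' _ => h i j') (Finset.mem_univ j))
    (Finset.single_le_sum (f := fun i' => ∑ j', F i' j')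
      (fun i' _ => Finset.sum_nonneg fun j' _ => h i' j') (Finset.mem_univ i))

attribute [local instance] Matrix.normedAddCommGroup Matrix.normedSpace

set_option maxHeartbeats 1000000 in
/-- For fixed `U` (with orthonormal columns) and `S`, the optimal `V` of
`f̄(U, V, S)` in (17)–(18) is uniquely determined: the function
`V ↦ (1/2)‖P_Ω(UV − M + S)‖_F² + (λ²/2)‖P_Ω̄(UV)‖_F²` has exactly one
minimizer. -/
theorem stmt_14 {m n r : ℕ} (Ω : Set (Fin m × Fin n)) [DecidablePred (· ∈ Ω)]
    (M S : Matrix (Fin m) (Fin n) ℝ) (lam : ℝ) (hlam : lam ≠ 0)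
    (U : Matrix (Fin m) (Fin r) ℝ) (hU : Uᵀ * U = 1) :
    ∃! V : Matrix (Fin r) (Fin n) ℝ,
      IsMinOn (fun V : Matrix (Fin r) (Fin n) ℝ =>
          (1 / 2) * frobNorm (projOmega Ω (U * V - M + S)) ^ 2 +
            (lam ^ 2 / 2) * frobNorm (projOmega Ωᶜ (U * V)) ^ 2)
        Set.univ V := by
  classical
  set w : Fin m → Fin n → ℝ := fun i j => if (i, j) ∈ Ω then (1 : ℝ) / 2 else lam ^ 2 / 2 with hw
  set T : Fin m → Fin n → ℝ := fun i j => if (i, j) ∈ Ω then (M - S) i j else 0 with hT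
  set g : Matrix (Fin r) (Fin n) ℝ → ℝ := fun V => ∑ i, ∑ j, w i j * ((U * V) i j - T i j) ^ 2
    with hg
  set f : Matrix (Fin r) (Fin n) ℝ → ℝ := fun V =>
      (1 / 2) * frobNorm (projOmega Ω (U * V - M + S)) ^ 2 +
        (lam ^ 2 / 2) * frobNorm (projOmega Ωᶜ (U * V)) ^ 2 with hf
  -- the objective equals g
  have hfg : f = g := by
    funext V
    simp only [hf, hg, frob_sq, Finset.mul_sum, ← Finset.sum_add_distrib]
    refine Finset.sum_congr rfl fun i _ => Finset.sum_congr rfl fun j _ => ?_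
    simp only [projOmega, hw, hT, Matrix.add_apply, Matrix.sub_apply, Set.mem_compl_iff]
    by_cases h : (i, j) ∈ Ω <;> simp [h] <;> ring
  rw [hfg]
  -- positivity facts
  have hμ : (0 : ℝ) < min ((1:ℝ)/2) (lam ^ 2 / 2) := by
    have : (0:ℝ) < lam ^ 2 := by positivity
    simp only [lt_min_iff]; constructor <;> nlinarith
  set μ := min ((1:ℝ)/2) (lam ^ 2 / 2) with hμdef
  have hwμ : ∀ i j, μ ≤ w i j := by
    intro i j; by_cases h : (i, j) ∈ Ω <;> simp [hw, h, hμdef, min_le_left, min_le_right]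
  have hw0 : ∀ i j, 0 ≤ w i j := fun i j => le_trans hμ.le (hwμ i j)
  -- lower bound : g V ≥ μ/2 * sqV - μ * sqT
  have hlb : ∀ V : Matrix (Fin r) (Fin n) ℝ,
      μ / 2 * (∑ i, ∑ j, (V i j) ^ 2) - μ * (∑ i, ∑ j, (T i j) ^ 2) ≤ g V := by
    intro V
    have h2 : (∑ i, ∑ j, (μ / 2 * ((U * V) i j) ^ 2 + (-μ) * (T i j) ^ 2))
        = μ / 2 * (∑ i, ∑ j, (V i j) ^ 2) - μ * (∑ i, ∑ j, (T i j) ^ 2) := by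
      rw [dsum_linear2, sum_sq_mul_eq U hU V]; ring
    rw [← h2]
    refine Finset.sum_le_sum fun i _ => Finset.sum_le_sum fun j _ => ?_
    have := hwμ i j
    nlinarith [sq_nonneg ((U * V) i j - 2 * T i j), sq_nonneg ((U * V) i j - T i j)]
  -- continuity
  have hcont : Continuous g := by
    apply continuous_finset_sum; intro i _
    apply continuous_finset_sum; intro j _
    have hUV : Continuous fun V : Matrix (Fin r) (Fin n) ℝ => (U * V) i j := by
      simp only [Matrix.mul_apply]
      exact continuous_finset_sum _ fun k _ =>
        (continuous_const.mul ((continuous_apply j).comp (continuous_apply k)))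
    exact continuous_const.mul ((hUV.sub continuous_const).pow 2)
  have hT2 : (0:ℝ) ≤ ∑ i, ∑ j, (T i j) ^ 2 :=
    Finset.sum_nonneg fun i _ => Finset.sum_nonneg fun j _ => sq_nonneg _
  have hg0 : 0 ≤ g 0 := Finset.sum_nonneg fun i _ => Finset.sum_nonneg fun j _ => by
    have := hw0 i j; positivity
  -- coercivity / existence
  have hexists : ∃ V₀, ∀ V, g V₀ ≤ g V := by
    apply hcont.exists_forall_le' 0
    set C : ℝ := (g 0 + μ * ∑ i, ∑ j, (T i j) ^ 2) * 2 / μ with hC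
    have hC0 : 0 ≤ C := by positivity
    filter_upwards [(tendsto_norm_cocompact_atTop
        (E := Matrix (Fin r) (Fin n) ℝ)).eventually_ge_atTop (Real.sqrt C + 1)] with V hV
    have hsq : ‖V‖ ^ 2 ≤ ∑ i, ∑ j, (V i j) ^ 2 := by
      have hVnn : (0:ℝ) ≤ ∑ i, ∑ j, (V i j) ^ 2 :=
        Finset.sum_nonneg fun i _ => Finset.sum_nonneg fun j _ => sq_nonneg _
      have h1 : ‖V‖ ≤ Real.sqrt (∑ i, ∑ j, (V i j) ^ 2) := by
        rw [Matrix.norm_le_iff (Real.sqrt_nonneg _)]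
        intro i j
        rw [Real.norm_eq_abs, ← Real.sqrt_sq_eq_abs]
        exact Real.sqrt_le_sqrt (dsum_le_of_entry _ fun i' j' => sq_nonneg _)
      nlinarith [Real.sq_sqrt hVnn, norm_nonneg V]
    have hVC : C ≤ ∑ i, ∑ j, (V i j) ^ 2 := by
      nlinarith [Real.sq_sqrt hC0, Real.sqrt_nonneg C, norm_nonneg V]
    have hCmul : μ / 2 * C - μ * (∑ i, ∑ j, (T i j) ^ 2) = g 0 := by
      rw [hC]; field_simp; ring
    calc g 0 = μ / 2 * C - μ * (∑ i, ∑ j, (T i j) ^ 2) := hCmul.symm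
      _ ≤ μ / 2 * (∑ i, ∑ j, (V i j) ^ 2) - μ * (∑ i, ∑ j, (T i j) ^ 2) := by nlinarith
      _ ≤ g V := hlb V
  obtain ⟨V₀, hV₀⟩ := hexists
  refine ⟨V₀, fun V _ => hV₀ V, ?_⟩
  -- uniqueness
  intro V₁ hV₁
  by_contra hne
  set D := V₁ - V₀ with hD
  have hD0 : D ≠ 0 := fun h => hne (by rwa [hD, sub_eq_zero] at h)
  set W := ((1:ℝ)/2) • (V₁ + V₀) with hW
  have hmid : ∀ i j, (U * W) i j = ((U * V₁) i j + (U * V₀) i j) / 2 := by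
    intro i j
    simp [hW, Matrix.mul_smul, Matrix.mul_add, div_eq_inv_mul]
    ring
  have hdiff : ∀ i j, (U * D) i j = (U * V₁) i j - (U * V₀) i j := by
    intro i j; simp [hD, Matrix.mul_sub]
  have hkey : g W = (1/2) * g V₁ + (1/2) * g V₀
      + (-(1/4)) * ∑ i, ∑ j, w i j * ((U * D) i j) ^ 2 := by
    rw [hg, ← dsum_linear3]
    refine Finset.sum_congr rfl fun i _ => Finset.sum_congr rfl fun j _ => ?_
    rw [hmid i j, hdiff i j]; ring
  have hmin1 : g V₀ ≤ g W := hV₀ W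
  have hmin3 : g V₁ ≤ g V₀ := hV₁ (Set.mem_univ V₀)
  have hsum0 : ∑ i, ∑ j, w i j * ((U * D) i j) ^ 2 ≤ 0 := by
    rw [hkey] at hmin1; linarith
  have hsumpos : 0 < ∑ i, ∑ j, w i j * ((U * D) i j) ^ 2 := by
    have h1 : ∀ i j, μ * ((U * D) i j) ^ 2 ≤ w i j * ((U * D) i j) ^ 2 := fun i j =>
      mul_le_mul_of_nonneg_right (hwμ i j) (sq_nonneg _)
    have h2 : 0 < ∑ i, ∑ j, ((U * D) i j) ^ 2 := by
      rw [sum_sq_mul_eq U hU D]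
      obtain ⟨i, j, hij⟩ : ∃ i j, D i j ≠ 0 := by
        by_contra h; push_neg at h
        exact hD0 (by funext i j; exact h i j)
      have hpos : 0 < (D i j) ^ 2 := by positivity
      exact lt_of_lt_of_le hpos (dsum_le_of_entry _ fun i' j' => sq_nonneg _)
    have h3 : μ * ∑ i, ∑ j, ((U * D) i j) ^ 2 ≤ ∑ i, ∑ j, w i j * ((U * D) i j) ^ 2 := by
      rw [Finset.mul_sum]
      refine Finset.sum_le_sum fun i _ => ?_
      rw [Finset.mul_sum]
      exact Finset.sum_le_sum fun j _ => h1 i j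
    nlinarith
  linarith
end
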